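/- Let n ≥ 3, β ≥ n, q > 1 with qβ > n - 1, and set a = (n - qβ)/2, b = n - 1 - qβ/2, c = n/2. Then for all 0 ≤ r < 1, F(a, b; c; r) ≤ max(1, Γ(n/2)Γ(qβ - n + 1)/(Γ(qβ/2)Γ((qβ - n + 2)/2))); i.e., the supremum of F(a,b;c;·) on [0,1) is attained at an endpoint. -/

import Mathlib

open Real

/-- Pochhammer symbol `(a)_k = Γ(a+k)/Γ(a)`. -/
noncomputable def Poch (a : ℝ) (k : ℕ) : ℝ := Real.Gamma (a + k) / Real.Gamma a

/-- Gauss hypergeometric function `F(a,b;c;x)`. -/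
noncomputable def Hyp (a b c x : ℝ) : ℝ :=
  ∑' k : ℕ, Poch a k * Poch b k / Poch c k * x ^ k / (Nat.factorial k : ℝ)

/-
Euler's transformation `F(a,b;c;x) = (1-x)^s F(A,B;c;x)`, with `A = c-a`, `B = c-b`,
`s = c-a-b > 0`, reduces the bound to `F(A,B;c;x) ≤ M (1-x)^(-s)`. The coefficients of
`F(A,B;c;·)` are `ρ n` times those of `(1-x)^(-s) = ∑ (s)_n x^n / n!`, where
`ρ n = (A)_n (B)_n / ((c)_n (s)_n)`. Since `(A+n)(B+n) - (c+n)(s+n) = (A-c)(B-c) = ab` has a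
fixed sign, `ρ` is monotone; it starts at `1` and tends to `Γ(c)Γ(s)/(Γ(A)Γ(B))` by Euler's limit
formula for `Γ`, so `ρ n ≤ M = max 1 (Γ(c)Γ(s)/(Γ(A)Γ(B)))`.

Euler's transformation itself is a comparison of coefficients in the Cauchy product
`(1-x)^(-s) F(a,b;c;x)`: they satisfy the same first-order recurrence as those of `F(A,B;c;·)`.
-/

open Filter Topology Finset Polynomial

section Coefficients

variable {𝕂 : Type*} [Field 𝕂] [CharZero 𝕂]

theorem ordinaryHypergeometricCoefficient_succ (a b : 𝕂) {c : 𝕂} (hc : ∀ k : ℕ, (k : 𝕂) ≠ -c)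
    (n : ℕ) :
    (n + 1) * (c + n) * ordinaryHypergeometricCoefficient a b c (n + 1) =
      (a + n) * (b + n) * ordinaryHypergeometricCoefficient a b c n := by
  have hcn : (ascPochhammer 𝕂 n).eval c ≠ 0 := fun h ↦ by
    obtain ⟨k, -, hk⟩ := (ascPochhammer_eval_eq_zero_iff n c).1 h
    exact hc k hk
  have hcn' : c + n ≠ 0 := fun h ↦ hc n (by linear_combination h)
  simp only [ordinaryHypergeometricCoefficient, ascPochhammer_succ_eval, Nat.factorial_succ]
  push_cast
  field_simp

theorem eq_ordinaryHypergeometricCoefficient {a b c : 𝕂} (hc : ∀ k : ℕ, (k : 𝕂) ≠ -c)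
    {w : ℕ → 𝕂} (h0 : w 0 = 1)
    (hw : ∀ n : ℕ, (n + 1) * (c + n) * w (n + 1) = (a + n) * (b + n) * w n) :
    w = ordinaryHypergeometricCoefficient a b c := by
  funext n
  induction n with
  | zero => simp [h0, ordinaryHypergeometricCoefficient]
  | succ n ih =>
    have hcn : (n + 1) * (c + n) ≠ 0 :=
      mul_ne_zero (Nat.cast_add_one_ne_zero n) fun h ↦ hc n (by linear_combination h)
    apply mul_left_cancel₀ hcn
    rw [hw, ordinaryHypergeometricCoefficient_succ a b hc, ih]

theorem Ring.multichoose_eq_ascPochhammer_div (s : 𝕂) (n : ℕ) :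
    Ring.multichoose s n = (ascPochhammer 𝕂 n).eval s / n.factorial := by
  rw [eq_div_iff (Nat.cast_ne_zero.2 n.factorial_ne_zero), mul_comm, ← nsmul_eq_mul,
    Ring.factorial_nsmul_multichoose_eq_ascPochhammer, ascPochhammer_smeval_eq_eval]

theorem Ring.multichoose_succ_mul (s : 𝕂) (n : ℕ) :
    (n + 1) * Ring.multichoose s (n + 1) = (s + n) * Ring.multichoose s n := by
  simp only [Ring.multichoose_eq_ascPochhammer_div, ascPochhammer_succ_eval, Nat.factorial_succ]
  push_cast
  field_simp

end Coefficients

-- On `i + m = k + 1` the weight `(k+1)(c+k)` splits as `m(c+k+i) + i(c+i-1)`; each part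
-- shifts down to the antidiagonal `k`, where the recurrences for `t` and `u` apply.
theorem mul_sum_antidiagonal_succ_eq {R : Type*} [CommRing R] {a b c : R} {t u : ℕ → R}
    (ht : ∀ i : ℕ, (i + 1) * (c + i) * t (i + 1) = (a + i) * (b + i) * t i)
    (hu : ∀ m : ℕ, (m + 1) * u (m + 1) = (c - a - b + m) * u m) (k : ℕ) :
    (k + 1) * (c + k) * ∑ p ∈ antidiagonal (k + 1), t p.1 * u p.2 =
      (c - a + k) * (c - b + k) * ∑ p ∈ antidiagonal k, t p.1 * u p.2 := by
  have hsplit : (k + 1) * (c + k) * ∑ p ∈ antidiagonal (k + 1), t p.1 * u p.2 =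
      ∑ p ∈ antidiagonal (k + 1), p.2 * (c + k + p.1) * (t p.1 * u p.2) +
        ∑ p ∈ antidiagonal (k + 1), p.1 * (c + p.1 - 1) * (t p.1 * u p.2) := by
    rw [mul_sum, ← sum_add_distrib]
    refine sum_congr rfl fun p hp ↦ ?_
    have hk : (p.1 : R) + p.2 = k + 1 := by
      rw [← Nat.cast_add, mem_antidiagonal.1 hp, Nat.cast_add_one]
    linear_combination -(c + k + p.1) * t p.1 * u p.2 * hk
  rw [hsplit, Nat.sum_antidiagonal_succ', Nat.sum_antidiagonal_succ]
  simp only [Nat.cast_zero, zero_mul, zero_add, Nat.cast_add_one]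
  rw [← sum_add_distrib, mul_sum]
  refine sum_congr rfl fun p hp ↦ ?_
  have hk : (p.1 : R) + p.2 = k := by rw [← Nat.cast_add, mem_antidiagonal.1 hp]
  linear_combination (c + k + p.1) * t p.1 * hu p.2 + u p.2 * ht p.1
    + (c + k + p.1) * t p.1 * u p.2 * hk

theorem one_le_radius_ordinaryHypergeometricSeries {𝕂 𝔸 : Type*} [RCLike 𝕂]
    [NormedDivisionRing 𝔸] [NormedAlgebra 𝕂 𝔸] (a b : 𝕂) {c : 𝕂} (hc : ∀ k : ℕ, (k : 𝕂) ≠ -c) :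
    1 ≤ (ordinaryHypergeometricSeries 𝔸 a b c).radius := by
  by_cases ha : ∃ k : ℕ, (k : 𝕂) = -a
  · obtain ⟨k, hk⟩ := ha
    rw [neg_eq_iff_eq_neg.1 hk.symm, ordinaryHypergeometric_radius_top_of_neg_nat₁]
    exact le_top
  by_cases hb : ∃ k : ℕ, (k : 𝕂) = -b
  · obtain ⟨k, hk⟩ := hb
    rw [neg_eq_iff_eq_neg.1 hk.symm, ordinaryHypergeometric_radius_top_of_neg_nat₂]
    exact le_top
  push Not at ha hb
  rw [ordinaryHypergeometricSeries_radius_eq_one _ a b c fun k ↦ ⟨ha k, hb k, hc k⟩]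

theorem summable_norm_ordinaryHypergeometricCoefficient_mul_pow (a b : ℝ) {c x : ℝ}
    (hc : ∀ k : ℕ, (k : ℝ) ≠ -c) (hx : |x| < 1) :
    Summable fun n ↦ ‖ordinaryHypergeometricCoefficient a b c n * x ^ n‖ := by
  have hx' : x ∈ Metric.eball (0 : ℝ) (ordinaryHypergeometricSeries ℝ a b c).radius :=
    lt_of_lt_of_le (by simpa [edist_dist] using hx)
      (one_le_radius_ordinaryHypergeometricSeries a b hc)
  simpa only [ordinaryHypergeometricSeries, FormalMultilinearSeries.ofScalars_apply_eq,
    smul_eq_mul] using FormalMultilinearSeries.summable_norm_apply _ hx'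

section Binomial

variable (s : ℝ) {x : ℝ}

theorem hasSum_multichoose_mul_pow (hx : |x| < 1) :
    HasSum (fun n ↦ Ring.multichoose s n * x ^ n) (1 / (1 - x) ^ s) := by
  have hx' : x ∈ Metric.eball (0 : ℝ) 1 := by simpa [edist_dist] using hx
  simpa only [FormalMultilinearSeries.ofScalars_apply_eq, smul_eq_mul, ← Ring.multichoose_eq,
    zero_add] using (one_div_one_sub_rpow_hasFPowerSeriesOnBall_zero s).hasSum hx'

theorem summable_norm_multichoose_mul_pow (hx : |x| < 1) :
    Summable fun n ↦ ‖Ring.multichoose s n * x ^ n‖ := by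
  have hf := one_div_one_sub_rpow_hasFPowerSeriesOnBall_zero s
  have hx' : x ∈ Metric.eball (0 : ℝ) (FormalMultilinearSeries.ofScalars ℝ
      fun n ↦ Ring.choose (s + n - 1) n).radius :=
    lt_of_lt_of_le (by simpa [edist_dist] using hx) hf.r_le
  simpa only [FormalMultilinearSeries.ofScalars_apply_eq, smul_eq_mul, ← Ring.multichoose_eq]
    using FormalMultilinearSeries.summable_norm_apply _ hx'

end Binomial

theorem ordinaryHypergeometric_eq_tsum_mul_pow (a b c x : ℝ) :
    ₂F₁ a b c x = ∑' n, ordinaryHypergeometricCoefficient a b c n * x ^ n :=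
  ordinaryHypergeometric_sum_eq a b c x

theorem ordinaryHypergeometric_sub_sub_eq_div {a b c x : ℝ} (hc : ∀ k : ℕ, (k : ℝ) ≠ -c)
    (hx : |x| < 1) :
    ₂F₁ (c - a) (c - b) c x = ₂F₁ a b c x / (1 - x) ^ (c - a - b) := by
  have hcoef : (fun n ↦ ∑ p ∈ antidiagonal n,
      ordinaryHypergeometricCoefficient a b c p.1 * Ring.multichoose (c - a - b) p.2) =
      ordinaryHypergeometricCoefficient (c - a) (c - b) c := by
    refine eq_ordinaryHypergeometricCoefficient hc (by simp [ordinaryHypergeometricCoefficient])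
      (mul_sum_antidiagonal_succ_eq (ordinaryHypergeometricCoefficient_succ a b hc)
        (Ring.multichoose_succ_mul _))
  rw [div_eq_mul_one_div, ← (hasSum_multichoose_mul_pow _ hx).tsum_eq,
    ordinaryHypergeometric_eq_tsum_mul_pow, ordinaryHypergeometric_eq_tsum_mul_pow,
    tsum_mul_tsum_eq_tsum_sum_antidiagonal_of_summable_norm
      (summable_norm_ordinaryHypergeometricCoefficient_mul_pow a b hc hx)
      (summable_norm_multichoose_mul_pow _ hx)]
  refine tsum_congr fun n ↦ ?_
  rw [← congrFun hcoef n, sum_mul]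
  refine sum_congr rfl fun p hp ↦ ?_
  rw [← mem_antidiagonal.1 hp, pow_add]
  ring

theorem prod_range_add_eq_ascPochhammer_eval {R : Type*} [CommSemiring R] (s : R) (n : ℕ) :
    ∏ j ∈ range n, (s + j) = (ascPochhammer R n).eval s := by
  induction n with
  | zero => simp
  | succ n ih => rw [prod_range_succ, ih, ascPochhammer_succ_eval]

theorem Real.GammaSeq_eq_div_ascPochhammer_eval (s : ℝ) (n : ℕ) :
    GammaSeq s n = (n : ℝ) ^ s * n.factorial / (ascPochhammer ℝ (n + 1)).eval s := by
  rw [GammaSeq, prod_range_add_eq_ascPochhammer_eval]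

section PochhammerRatio

variable {A B c s : ℝ}

theorem tendsto_ascPochhammer_ratio (hA : 0 < A) (hB : 0 < B) (hc : 0 < c) (hs : 0 < s)
    (h : A + B = c + s) :
    Tendsto (fun n ↦ (ascPochhammer ℝ n).eval A * (ascPochhammer ℝ n).eval B /
        ((ascPochhammer ℝ n).eval c * (ascPochhammer ℝ n).eval s)) atTop
      (𝓝 (Gamma c * Gamma s / (Gamma A * Gamma B))) := by
  have hGamma : Tendsto (fun n ↦ GammaSeq c n * GammaSeq s n / (GammaSeq A n * GammaSeq B n))
      atTop (𝓝 (Gamma c * Gamma s / (Gamma A * Gamma B))) :=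
    ((GammaSeq_tendsto_Gamma c).mul (GammaSeq_tendsto_Gamma s)).div
      ((GammaSeq_tendsto_Gamma A).mul (GammaSeq_tendsto_Gamma B))
      (mul_pos (Gamma_pos_of_pos hA) (Gamma_pos_of_pos hB)).ne'
  rw [← tendsto_add_atTop_iff_nat 1]
  refine hGamma.congr' ((eventually_ge_atTop 1).mono fun n hn ↦ ?_)
  have hn0 : (0 : ℝ) < n := by exact_mod_cast hn
  have hpow : (n : ℝ) ^ c * (n : ℝ) ^ s = (n : ℝ) ^ A * (n : ℝ) ^ B := by
    rw [← rpow_add hn0, ← rpow_add hn0, h]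
  have := (ascPochhammer_pos (n + 1) A hA).ne'
  have := (ascPochhammer_pos (n + 1) B hB).ne'
  have := (ascPochhammer_pos (n + 1) c hc).ne'
  have := (ascPochhammer_pos (n + 1) s hs).ne'
  have := (rpow_pos_of_pos hn0 A).ne'
  have := (rpow_pos_of_pos hn0 B).ne'
  simp only [GammaSeq_eq_div_ascPochhammer_eval]
  field_simp
  linear_combination hpow

theorem ascPochhammer_ratio_le_max (hA : 0 < A) (hB : 0 < B) (hc : 0 < c) (hs : 0 < s)
    (h : A + B = c + s) (n : ℕ) :
    (ascPochhammer ℝ n).eval A * (ascPochhammer ℝ n).eval B /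
        ((ascPochhammer ℝ n).eval c * (ascPochhammer ℝ n).eval s) ≤
      max 1 (Gamma c * Gamma s / (Gamma A * Gamma B)) := by
  set ρ : ℕ → ℝ := fun n ↦ (ascPochhammer ℝ n).eval A * (ascPochhammer ℝ n).eval B /
    ((ascPochhammer ℝ n).eval c * (ascPochhammer ℝ n).eval s) with hρ
  have hρpos (n : ℕ) : 0 < ρ n := by
    have := ascPochhammer_pos n A hA; have := ascPochhammer_pos n B hB
    have := ascPochhammer_pos n c hc; have := ascPochhammer_pos n s hs
    positivity
  have hstep (n : ℕ) : ρ (n + 1) * ((c + n) * (s + n)) =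
      ρ n * ((c + n) * (s + n) + (A - c) * (B - c)) := by
    have := (ascPochhammer_pos n c hc).ne'; have := (ascPochhammer_pos n s hs).ne'
    have : c + n ≠ 0 := by positivity
    have : s + n ≠ 0 := by positivity
    simp only [hρ, ascPochhammer_succ_eval]
    field_simp
    linear_combination (ascPochhammer ℝ n).eval A * (ascPochhammer ℝ n).eval B * (n + c) * h
  have hcs (n : ℕ) : 0 < (c + n) * (s + n) := by positivity
  rcases le_total 0 ((A - c) * (B - c)) with hd | hd
  · have hmono : Monotone ρ := monotone_nat_of_le_succ fun n ↦
      le_of_mul_le_mul_right (by nlinarith [hstep n, hρpos n]) (hcs n)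
    exact (hmono.ge_of_tendsto (tendsto_ascPochhammer_ratio hA hB hc hs h) n).trans
      (le_max_right _ _)
  · have hanti : Antitone ρ := antitone_nat_of_succ_le fun n ↦
      le_of_mul_le_mul_right (by nlinarith [hstep n, hρpos n]) (hcs n)
    exact (hanti (Nat.zero_le n)).trans (by simp [hρ])

end PochhammerRatio

theorem natCast_ne_neg_of_pos {c : ℝ} (hc : 0 < c) (k : ℕ) : (k : ℝ) ≠ -c :=
  ((neg_neg_of_pos hc).trans_le k.cast_nonneg).ne'

theorem ordinaryHypergeometric_le_max_div {A B c x : ℝ} (hA : 0 < A) (hB : 0 < B) (hc : 0 < c)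
    (hs : 0 < A + B - c) (hx0 : 0 ≤ x) (hx1 : x < 1) :
    ₂F₁ A B c x ≤
      max 1 (Gamma c * Gamma (A + B - c) / (Gamma A * Gamma B)) / (1 - x) ^ (A + B - c) := by
  set s := A + B - c
  set M := max 1 (Gamma c * Gamma s / (Gamma A * Gamma B))
  have hx : |x| < 1 := abs_lt.2 ⟨by linarith, hx1⟩
  have hcoef (n : ℕ) : ordinaryHypergeometricCoefficient A B c n =
      (ascPochhammer ℝ n).eval A * (ascPochhammer ℝ n).eval B /
        ((ascPochhammer ℝ n).eval c * (ascPochhammer ℝ n).eval s) * Ring.multichoose s n := by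
    have := (ascPochhammer_pos n c hc).ne'
    have := (ascPochhammer_pos n s hs).ne'
    rw [Ring.multichoose_eq_ascPochhammer_div]
    field_simp
  have hM (n : ℕ) : ordinaryHypergeometricCoefficient A B c n * x ^ n ≤
      M * (Ring.multichoose s n * x ^ n) := by
    have hbin : 0 ≤ Ring.multichoose s n * x ^ n := by
      rw [Ring.multichoose_eq_ascPochhammer_div]
      have := ascPochhammer_pos n s hs
      positivity
    rw [hcoef, mul_assoc]
    exact mul_le_mul_of_nonneg_right
      (ascPochhammer_ratio_le_max hA hB hc hs (by ring) n) hbin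
  rw [ordinaryHypergeometric_eq_tsum_mul_pow, div_eq_mul_one_div,
    ← (hasSum_multichoose_mul_pow s hx).tsum_eq, ← tsum_mul_left]
  exact Summable.tsum_le_tsum hM
    (summable_norm_ordinaryHypergeometricCoefficient_mul_pow A B (natCast_ne_neg_of_pos hc)
      hx).of_norm
    ((hasSum_multichoose_mul_pow s hx).summable.mul_left M)

theorem ordinaryHypergeometric_le_max {a b c x : ℝ} (hc : 0 < c) (ha : 0 < c - a)
    (hb : 0 < c - b) (hs : 0 < c - a - b) (hx0 : 0 ≤ x) (hx1 : x < 1) :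
    ₂F₁ a b c x ≤ max 1 (Gamma c * Gamma (c - a - b) / (Gamma (c - a) * Gamma (c - b))) := by
  have hsab : c - a + (c - b) - c = c - a - b := by ring
  have hbound := ordinaryHypergeometric_le_max_div ha hb hc (hsab ▸ hs) hx0 hx1
  rwa [hsab, ordinaryHypergeometric_sub_sub_eq_div (natCast_ne_neg_of_pos hc)
      (abs_lt.2 ⟨by linarith, hx1⟩),
    div_le_div_iff_of_pos_right (rpow_pos_of_pos (by linarith) _)] at hbound

theorem Poch_eq_ascPochhammer_eval {a : ℝ} (ha : Gamma a ≠ 0) (k : ℕ) :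
    Poch a k = (ascPochhammer ℝ k).eval a := by
  induction k with
  | zero => simp [Poch, ha]
  | succ k ih =>
    have hak : a + k ≠ 0 := fun h ↦ ha (by rw [eq_neg_of_add_eq_zero_left h, Gamma_neg_nat_eq_zero])
    rw [Poch, Nat.cast_succ, ← add_assoc, Gamma_add_one hak, ascPochhammer_succ_eval, ← ih, Poch]
    ring

theorem Hyp_eq_ordinaryHypergeometric {a b c : ℝ} (ha : Gamma a ≠ 0) (hb : Gamma b ≠ 0)
    (hc : Gamma c ≠ 0) (x : ℝ) : Hyp a b c x = ₂F₁ a b c x := by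
  rw [Hyp, ordinaryHypergeometric_eq_tsum_mul_pow]
  refine tsum_congr fun k ↦ ?_
  rw [Poch_eq_ascPochhammer_eval ha, Poch_eq_ascPochhammer_eval hb, Poch_eq_ascPochhammer_eval hc]
  ring

-- Here `Poch a k = Γ(a + k) / 0 = 0` for every `k`, including `k = 0`.
theorem Hyp_eq_zero_of_Gamma_eq_zero {a b : ℝ} (h : Gamma a = 0 ∨ Gamma b = 0) (c x : ℝ) :
    Hyp a b c x = 0 := by
  rcases h with h | h <;> simp [Hyp, Poch, h]

theorem Hyp_le_max {a b c x : ℝ} (hc : 0 < c) (ha : 0 < c - a) (hb : 0 < c - b)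
    (hs : 0 < c - a - b) (hx0 : 0 ≤ x) (hx1 : x < 1) :
    Hyp a b c x ≤ max 1 (Gamma c * Gamma (c - a - b) / (Gamma (c - a) * Gamma (c - b))) := by
  by_cases h : Gamma a = 0 ∨ Gamma b = 0
  · rw [Hyp_eq_zero_of_Gamma_eq_zero h]
    exact zero_le_one.trans (le_max_left _ _)
  push Not at h
  rw [Hyp_eq_ordinaryHypergeometric h.1 h.2 (Gamma_pos_of_pos hc).ne']
  exact ordinaryHypergeometric_le_max hc ha hb hs hx0 hx1

theorem stmt18_general (n : ℕ) (hn : 3 ≤ n) (β q : ℝ)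
    (hqβ : (n : ℝ) - 1 < q * β) :
    ∀ r : ℝ, 0 ≤ r → r < 1 →
      Hyp (((n : ℝ) - q * β) / 2) ((n : ℝ) - 1 - q * β / 2) ((n : ℝ) / 2) r ≤
        max 1 (Real.Gamma ((n : ℝ) / 2) * Real.Gamma (q * β - (n : ℝ) + 1) /
          (Real.Gamma (q * β / 2) * Real.Gamma ((q * β - (n : ℝ) + 2) / 2))) := by
  intro r hr0 hr1
  have hn3 : (3 : ℝ) ≤ n := by exact_mod_cast hn
  have h := Hyp_le_max (a := ((n : ℝ) - q * β) / 2) (b := (n : ℝ) - 1 - q * β / 2)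
    (c := (n : ℝ) / 2)
    (by linarith) (by linarith) (by linarith) (by linarith) hr0 hr1
  have e₁ : (n : ℝ) / 2 - ((n : ℝ) - q * β) / 2 = q * β / 2 := by ring
  have e₂ : (n : ℝ) / 2 - ((n : ℝ) - 1 - q * β / 2) = (q * β - n + 2) / 2 := by ring
  have e₃ : (n : ℝ) / 2 - ((n : ℝ) - q * β) / 2 - ((n : ℝ) - 1 - q * β / 2) = q * β - n + 1 := by
    ring
  rwa [e₃, e₁, e₂] at h

theorem stmt18 (n : ℕ) (hn : 3 ≤ n) (β q : ℝ) (hβ : (n : ℝ) ≤ β) (hq : 1 < q)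
    (hqβ : (n : ℝ) - 1 < q * β) :
    ∀ r : ℝ, 0 ≤ r → r < 1 →
      Hyp (((n : ℝ) - q * β) / 2) ((n : ℝ) - 1 - q * β / 2) ((n : ℝ) / 2) r ≤
        max 1 (Real.Gamma ((n : ℝ) / 2) * Real.Gamma (q * β - (n : ℝ) + 1) /
          (Real.Gamma (q * β / 2) * Real.Gamma ((q * β - (n : ℝ) + 2) / 2))) :=
  stmt18_general n hn β q hqβ
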